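/- arXiv:0803.0665 — 2 statements merged into one kernel-verified Lean document; each statement's English description precedes it below -/
import Mathlib

section
/- Finitely generated free groups are Hopfian: every surjective group homomorphism from the free group on c generators to itself is injective. -/
/-!
Mal'cev's argument. A finitely generated group has only finitely many homomorphisms to a finite
group `Q`, and precomposition with a surjective endomorphism `f` is injective on them, hence
bijective; so every homomorphism to `Q` factors through `f` and kills `ker f`. In a residually
finite group this forces `ker f = 1`.

Free groups are residually finite: a reduced word `L` of length `n` traces a path
`n → n - 1 → ⋯ → 0` in `Fin (n + 1)`, the letter `L[j]` labelling the edge between `j + 1` and `j`.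
Since no two adjacent letters cancel, the edges carrying a given generator form a partial
bijection, which extends to a permutation; the resulting representation moves `n` to `0`.
-/

open Function

theorem Set.InjOn.exists_perm_eqOn {X : Type*} [Finite X] {f : X → X} {s : Set X}
    (hf : InjOn f s) : ∃ σ : Equiv.Perm X, EqOn σ f s := by
  classical
  exact ⟨(Equiv.Set.imageOfInjOn f s hf).extendSubtype, fun x hx =>
    Equiv.extendSubtype_apply_of_mem (Equiv.Set.imageOfInjOn f s hf) x hx⟩

theorem Equiv.Perm.exists_forall_apply_eq_of_rel {X : Type*} [Finite X] (r : X → X → Prop)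
    (hfun : ∀ x y y', r x y → r x y' → y = y') (hinj : ∀ x x' y, r x y → r x' y → x = x') :
    ∃ σ : Perm X, ∀ x y, r x y → σ x = y := by
  classical
  let f x := if h : ∃ y, r x y then h.choose else x
  have hf : ∀ x y, r x y → f x = y := fun x y hxy => by
    have h : ∃ y, r x y := ⟨y, hxy⟩
    simp only [f, dif_pos h]
    exact hfun x _ _ h.choose_spec hxy
  have hinjOn : Set.InjOn f {x | ∃ y, r x y} := by
    rintro x ⟨y, hxy⟩ x' ⟨y', hxy'⟩ hxx'
    rw [hf x y hxy, hf x' y' hxy'] at hxx'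
    exact hinj x x' y' (hxx' ▸ hxy) hxy'
  obtain ⟨σ, hσ⟩ := hinjOn.exists_perm_eqOn
  exact ⟨σ, fun x y hxy => (hσ ⟨y, hxy⟩).trans (hf x y hxy)⟩

theorem Equiv.Perm.list_prod_apply_eq_of_forall_getElem {X : Type*} (l : List (Perm X))
    (v : ℕ → X) (h : ∀ j (hj : j < l.length), l[j] (v (j + 1)) = v j) :
    l.prod (v l.length) = v 0 := by
  induction l generalizing v with
  | nil => rfl
  | cons σ l ih =>
    rw [List.prod_cons, Perm.mul_apply, List.length_cons,
      ih (fun j => v (j + 1)) fun j hj => h (j + 1) (by simpa using hj)]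
    exact h 0 (by simp)

namespace FreeGroup

variable {α : Type*}

theorem IsReduced.getElem_succ_ne {L : List (α × Bool)} (hL : IsReduced L) {j : ℕ}
    (hj : j + 1 < L.length) {i : α} {b : Bool} (h : L[j] = (i, b)) : L[j + 1] ≠ (i, !b) := by
  intro h'
  have := hL.getElem j hj
  simp [h, h'] at this

def WordEdge (L : List (α × Bool)) (i : α) (x y : ℕ) : Prop :=
  ∃ (j : ℕ) (hj : j < L.length),
    (L[j] = (i, true) ∧ x = j + 1 ∧ y = j) ∨ (L[j] = (i, false) ∧ x = j ∧ y = j + 1)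

theorem IsReduced.wordEdge_right_unique {L : List (α × Bool)} (hL : IsReduced L) {i : α}
    {x y y' : ℕ} (h : WordEdge L i x y) (h' : WordEdge L i x y') : y = y' := by
  obtain ⟨j, hj, ⟨hl, rfl, rfl⟩ | ⟨hl, rfl, rfl⟩⟩ := h <;>
    obtain ⟨j', hj', ⟨hl', hx, rfl⟩ | ⟨hl', hx, rfl⟩⟩ := h'
  · omega
  · subst hx
    exact absurd hl' (hL.getElem_succ_ne hj' hl)
  · subst hx
    exact absurd hl (hL.getElem_succ_ne hj hl')
  · omega

theorem IsReduced.wordEdge_left_unique {L : List (α × Bool)} (hL : IsReduced L) {i : α}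
    {x x' y : ℕ} (h : WordEdge L i x y) (h' : WordEdge L i x' y) : x = x' := by
  obtain ⟨j, hj, ⟨hl, rfl, rfl⟩ | ⟨hl, rfl, rfl⟩⟩ := h <;>
    obtain ⟨j', hj', ⟨hl', rfl, hy⟩ | ⟨hl', rfl, hy⟩⟩ := h'
  · omega
  · subst hy
    exact absurd hl (hL.getElem_succ_ne hj hl')
  · subst hy
    exact absurd hl' (hL.getElem_succ_ne hj' hl)
  · omega

theorem exists_monoidHom_perm_apply_ne_one {g : FreeGroup α} (hg : g ≠ 1) :
    ∃ (n : ℕ) (φ : FreeGroup α →* Equiv.Perm (Fin (n + 1))), φ g ≠ 1 := by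
  classical
  set L := g.toWord
  have hL : IsReduced L := isReduced_toWord
  set n := L.length
  have hn : n ≠ 0 := by simpa [n, L] using hg
  choose σ hσ using fun i => Equiv.Perm.exists_forall_apply_eq_of_rel (X := Fin (n + 1))
    (fun x y => WordEdge L i x y) (fun _ _ _ h h' => Fin.ext (hL.wordEdge_right_unique h h'))
    (fun _ _ _ h h' => Fin.ext (hL.wordEdge_left_unique h h'))
  have hval {j : ℕ} (hj : j ≤ n) : (Fin.ofNat (n + 1) j : ℕ) = j := by
    rw [Fin.val_ofNat, Nat.mod_eq_of_lt (by omega)]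
  have hstep (j : ℕ) (hj : j < n) :
      cond L[j].2 (σ L[j].1) (σ L[j].1)⁻¹ (Fin.ofNat (n + 1) (j + 1)) = Fin.ofNat (n + 1) j := by
    rcases hLj : L[j] with ⟨i, _ | _⟩
    · rw [cond_false, Equiv.Perm.inv_eq_iff_eq]
      exact (hσ i _ _ ⟨j, hj, .inr ⟨hLj, hval hj.le, hval hj⟩⟩).symm
    · exact hσ i _ _ ⟨j, hj, .inl ⟨hLj, hval hj, hval hj.le⟩⟩
  refine ⟨n, lift σ, fun hφ => hn ?_⟩
  have hpath : lift σ g (Fin.ofNat (n + 1) n) = Fin.ofNat (n + 1) 0 := by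
    rw [← mk_toWord (x := g), lift_mk]
    simpa using Equiv.Perm.list_prod_apply_eq_of_forall_getElem
      (L.map fun x => cond x.2 (σ x.1) (σ x.1)⁻¹) (Fin.ofNat (n + 1))
      fun j hj => by simpa using hstep j (by simpa using hj)
  rw [hφ, Equiv.Perm.one_apply] at hpath
  simpa [hval le_rfl] using congrArg Fin.val hpath

instance residuallyFinite : Group.ResiduallyFinite (FreeGroup α) :=
  Group.residuallyFinite_of_forall_exists_finite_monoidHom fun _ hg =>
    let ⟨_, φ, hφ⟩ := exists_monoidHom_perm_apply_ne_one hg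
    ⟨_, _, inferInstance, φ, hφ⟩

end FreeGroup

instance MonoidHom.finite_of_fg {G Q : Type*} [Monoid G] [Monoid.FG G] [Monoid Q] [Finite Q] :
    Finite (G →* Q) := by
  obtain ⟨S, hS⟩ := Monoid.fg_def.mp ‹_›
  refine Finite.of_injective (fun ψ : G →* Q => fun s : S => ψ s) fun ψ ψ' h => ?_
  exact MonoidHom.eq_of_eqOn_denseM hS fun s hs => congrFun h ⟨s, hs⟩

theorem Group.ResiduallyFinite.injective_of_surjective {G : Type*} [Group G] [Group.FG G]
    [Group.ResiduallyFinite G] {f : G →* G} (hf : Surjective f) : Injective f := by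
  refine (injective_iff_map_eq_one f).mpr fun g hg =>
    Group.eq_one_iff_forall_finiteIndexNormalSubroup g fun H => ?_
  have hprecomp : Injective fun ψ : G →* G ⧸ H.toSubgroup => ψ.comp f :=
    fun _ _ h => (MonoidHom.cancel_right hf).mp h
  obtain ⟨ψ, hψ⟩ := Finite.injective_iff_surjective.mp hprecomp (QuotientGroup.mk' H.toSubgroup)
  rw [← FiniteIndexNormalSubgroup.mem_toSubgroup_iff,
    ← QuotientGroup.eq_one_iff (N := H.toSubgroup), ← QuotientGroup.mk'_apply, ← hψ,
    MonoidHom.comp_apply, hg, map_one]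

/-- Finitely generated free groups are Hopfian: a surjective endomorphism of
the free group on `c` generators is injective. -/
theorem freeGroup_hopfian (c : ℕ)
    (f : FreeGroup (Fin c) →* FreeGroup (Fin c))
    (hf : Function.Surjective f) : Function.Injective f :=
  Group.ResiduallyFinite.injective_of_surjective hf
end

section
/- If a subgroup H of the free group F(c) with c ≥ 2 is both a quotient (image of a homomorphism from F(c)) and a proper subgroup of finite index in F(c), then a contradiction follows; i.e., no proper finite-index subgroup of F(c) is generated by c or fewer elements when c ≥ 2. -/
/-!
Count homomorphisms to `ℤ/2`. Let `H` have index `d` in the free group `F` on `α`, and let `F`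
act on `M = Map(F ⧸ H, ℤ/2)`. A 1-cocycle `F → M` is freely determined by its values on the
generators, so there are `2 ^ (d * |α|)` of them. Restricting a cocycle to `H` and evaluating it
at the trivial coset gives a homomorphism `H → ℤ/2` (Shapiro's lemma), and a cocycle killed by
this map is a coboundary; there are at most `2 ^ (d - 1)` coboundaries because the constant
functions are invariant. Hence `|Hom(H, ℤ/2)| ≥ 2 ^ (d * (|α| - 1) + 1)`, the mod 2 shadow of the
Schreier index formula. If `H` is also a quotient of `F(c)`, then `|Hom(H, ℤ/2)| ≤ 2 ^ c`, so
`d * (c - 1) + 1 ≤ c`, which forces `d = 1` when `c ≥ 2`.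
-/

theorem MonoidHom.card_range_mul_card_ker {G G' : Type*} [Group G] [Group G']
    (f : G →* G') : Nat.card f.range * Nat.card f.ker = Nat.card G := by
  rw [← Subgroup.index_ker, mul_comm, Subgroup.card_mul_index]

theorem FreeGroup.injective_comp_of_surjective {α H A : Type*} [Group H] [Group A]
    {π : FreeGroup α →* H} (hπ : Function.Surjective π) :
    Function.Injective fun (χ : H →* A) (i : α) => χ (π (.of i)) := fun _ _ h =>
  (MonoidHom.cancel_right hπ).1 <| FreeGroup.ext_hom _ _ (congrFun h)

namespace groupCohomology

section Cocycles

variable (G M : Type*) [Group G] [CommGroup M] [MulDistribMulAction G M]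

def mulCocycles₁ : Subgroup (G → M) where
  carrier := {f | IsMulCocycle₁ f}
  one_mem' _ _ := by simp
  mul_mem' {f f'} hf hf' g h := by
    simp only [Pi.mul_apply, hf g h, hf' g h, smul_mul']
    ac_rfl
  inv_mem' {f} hf g h := by
    simp only [Pi.inv_apply, hf g h, smul_inv', mul_inv]

variable {G M}

def mulCoboundary₁ : M →* mulCocycles₁ G M where
  toFun x := ⟨fun g => g • x / x, fun g h => by
    simp only [mul_smul, smul_div', div_mul_div_cancel]⟩
  map_one' := by ext; simp
  map_mul' x y := by
    ext g
    exact (congrArg (· / (x * y)) (smul_mul' g x y)).trans (mul_div_mul_comm _ _ _ _)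

theorem isMulCocycle₁_left_of_right_eq (ψ : G →* M ⋊[MulDistribMulAction.toMulAut G M] G)
    (hψ : ∀ g, (ψ g).right = g) : IsMulCocycle₁ fun g => (ψ g).left := fun g h => by
  dsimp only
  rw [map_mul, SemidirectProduct.mul_left, hψ, mul_comm]
  rfl

def IsMulCocycle₁.toSemidirectProduct {f : G → M} (hf : IsMulCocycle₁ f) :
    G →* M ⋊[MulDistribMulAction.toMulAut G M] G where
  toFun g := ⟨f g, g⟩
  map_one' := by ext <;> simp [map_one_of_isMulCocycle₁ hf]
  map_mul' g h := by
    ext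
    · simp only [SemidirectProduct.mul_left, hf g h, mul_comm]; rfl
    · rfl

end Cocycles

section FreeGroup

variable {α M : Type*} [CommGroup M] [MulDistribMulAction (FreeGroup α) M]

def semidirectLift (u : α → M) :
    FreeGroup α →* M ⋊[MulDistribMulAction.toMulAut (FreeGroup α) M] FreeGroup α :=
  FreeGroup.lift fun i => ⟨u i, .of i⟩

theorem semidirectLift_right (u : α → M) (g : FreeGroup α) : (semidirectLift u g).right = g :=
  DFunLike.congr_fun (FreeGroup.ext_hom (SemidirectProduct.rightHom.comp (semidirectLift u))
    (.id _) fun i => by simp [semidirectLift]) g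

def mulCocycles₁FreeGroupEquiv : mulCocycles₁ (FreeGroup α) M ≃ (α → M) where
  toFun f i := f.1 (.of i)
  invFun u := ⟨fun g => (semidirectLift u g).left,
    isMulCocycle₁_left_of_right_eq _ (semidirectLift_right u)⟩
  left_inv f := by
    have hf : IsMulCocycle₁ f.1 := f.2
    have : semidirectLift (fun i => f.1 (.of i)) = hf.toSemidirectProduct :=
      FreeGroup.ext_hom _ _ fun _ => FreeGroup.lift_apply_of
    ext g
    exact congrArg SemidirectProduct.left (DFunLike.congr_fun this g)
  right_inv u := by ext i; simp [semidirectLift]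

theorem card_mulCocycles₁_freeGroup [Finite α] :
    Nat.card (mulCocycles₁ (FreeGroup α) M) = Nat.card M ^ Nat.card α := by
  rw [Nat.card_congr mulCocycles₁FreeGroupEquiv, Nat.card_fun]

end FreeGroup

section Shapiro

variable {G A : Type*} [Group G] [CommGroup A] (H : Subgroup G)

attribute [local instance] arrowMulDistribMulAction

theorem smul_coe_one_of_mem {h : G} (hh : h ∈ H) : h • ((1 : G) : G ⧸ H) = (1 : G) := by
  rwa [← MulAction.mem_stabilizer_iff, MulAction.stabilizer_quotient]

theorem out_smul_coe_one (x : G ⧸ H) : x.out • ((1 : G) : G ⧸ H) = x := by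
  simp

/-- On `H¹` this induces Shapiro's isomorphism `H¹(G, Map(G ⧸ H, A)) ≃ Hom(H, A)`. -/
def shapiroMap : mulCocycles₁ G (G ⧸ H → A) →* (H →* A) where
  toFun f :=
    { toFun h := f.1 h (1 : G)
      map_one' := by rw [OneMemClass.coe_one, map_one_of_isMulCocycle₁ f.2, Pi.one_apply]
      map_mul' h h' := by
        rw [Subgroup.coe_mul, f.2, mul_comm, Pi.mul_apply]
        congr 1
        exact congrArg (f.1 h') (smul_coe_one_of_mem H (inv_mem h.2)) }
  map_one' := rfl
  map_mul' _ _ := rfl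

theorem ker_shapiroMap_le_range_mulCoboundary₁ :
    (shapiroMap (A := A) H).ker ≤ (mulCoboundary₁ (G := G)).range := by
  intro f hf
  have hf₁ : IsMulCocycle₁ f.1 := f.2
  have hfH : ∀ s ∈ H, f.1 s (1 : G) = 1 := fun s hs => DFunLike.congr_fun hf ⟨s, hs⟩
  refine ⟨fun x => (f.1 x.out x)⁻¹, Subtype.ext <| funext fun g => funext fun x => ?_⟩
  set t := x.out
  set t' := (g⁻¹ • x).out
  have hs : t⁻¹ * g * t' ∈ H := by
    rw [← MulAction.stabilizer_quotient H, MulAction.mem_stabilizer_iff, mul_smul, mul_smul,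
      out_smul_coe_one, smul_inv_smul, inv_smul_eq_iff, out_smul_coe_one]
  have hgt : g * t' = t * (t⁻¹ * g * t') := by group
  have htx : t⁻¹ • x = (1 : G) := by rw [inv_smul_eq_iff, out_smul_coe_one]
  have key : f.1 t x = f.1 t' (g⁻¹ • x) * f.1 g x := by
    have h₁ := congrFun (hf₁ g t') x
    rw [hgt, hf₁, Pi.mul_apply, Pi.mul_apply] at h₁
    change f.1 (t⁻¹ * g * t') (t⁻¹ • x) * _ = f.1 t' (g⁻¹ • x) * _ at h₁
    rwa [htx, hfH _ hs, one_mul] at h₁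
  show (f.1 t' (g⁻¹ • x))⁻¹ / (f.1 t x)⁻¹ = f.1 g x
  rw [key, inv_div_inv, mul_div_cancel_left]

theorem card_le_card_ker_mulCoboundary₁ [Finite A] [H.FiniteIndex] :
    Nat.card A ≤ Nat.card (mulCoboundary₁ (G := G) (M := G ⧸ H → A)).ker :=
  Nat.card_le_card_of_injective (fun a => ⟨fun _ => a, Subtype.ext <| funext fun _ => div_self' _⟩)
    fun _ _ hab => congrFun (congrArg Subtype.val hab) (1 : G)

theorem card_mulCocycles₁_mul_card_le [Finite A] [H.FiniteIndex] [Finite (H →* A)] :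
    Nat.card (mulCocycles₁ G (G ⧸ H → A)) * Nat.card A ≤
      Nat.card (H →* A) * Nat.card A ^ H.index := by
  set δ := mulCoboundary₁ (G := G) (M := G ⧸ H → A)
  have : Finite δ.range := Finite.of_surjective _ δ.rangeRestrict_surjective
  have hM : Nat.card (G ⧸ H → A) = Nat.card A ^ H.index := Nat.card_fun
  calc Nat.card (mulCocycles₁ G (G ⧸ H → A)) * Nat.card A
      = Nat.card (shapiroMap (A := A) H).range * Nat.card (shapiroMap (A := A) H).ker *
          Nat.card A := by rw [MonoidHom.card_range_mul_card_ker]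
    _ ≤ Nat.card (H →* A) * (Nat.card δ.range * Nat.card δ.ker) := by
        rw [mul_assoc]
        gcongr
        · exact Subgroup.card_le_card_group _
        · exact Subgroup.card_le_of_le (ker_shapiroMap_le_range_mulCoboundary₁ H)
        · exact card_le_card_ker_mulCoboundary₁ H
    _ = Nat.card (H →* A) * Nat.card A ^ H.index := by
        rw [MonoidHom.card_range_mul_card_ker, hM]

end Shapiro

end groupCohomology

section

open groupCohomology

attribute [local instance] arrowMulDistribMulAction

theorem Subgroup.index_mul_card_add_one_le {α β : Type*} [Finite α] [Finite β]
    (H : Subgroup (FreeGroup α)) [H.FiniteIndex] {π : FreeGroup β →* H}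
    (hπ : Function.Surjective π) : H.index * Nat.card α + 1 ≤ Nat.card β + H.index := by
  let A := Multiplicative (ZMod 2)
  have hA : Nat.card A = 2 := Nat.card_zmod 2
  have hinj := FreeGroup.injective_comp_of_surjective (A := A) hπ
  have : Finite (H →* A) := Finite.of_injective _ hinj
  have hhom : Nat.card (H →* A) ≤ 2 ^ Nat.card β :=
    (Nat.card_le_card_of_injective _ hinj).trans_eq (by rw [Nat.card_fun, hA])
  have hcount := card_mulCocycles₁_mul_card_le (A := A) H
  rw [card_mulCocycles₁_freeGroup, Nat.card_fun, hA, ← pow_mul, ← pow_succ] at hcount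
  have : 2 ^ (H.index * Nat.card α + 1) ≤ 2 ^ (Nat.card β + H.index) :=
    calc 2 ^ (H.index * Nat.card α + 1) ≤ Nat.card (H →* A) * 2 ^ H.index := hcount
      _ ≤ 2 ^ Nat.card β * 2 ^ H.index := by gcongr
      _ = 2 ^ (Nat.card β + H.index) := (pow_add _ _ _).symm
  exact (Nat.pow_le_pow_iff_right (by norm_num)).1 this

end

/-- No proper finite-index subgroup of the free group of rank `c ≥ 2` is the
image of a homomorphism from that free group (i.e. generated by `c` or fewer
elements). -/
theorem no_proper_finite_index_quotient_subgroup (c : ℕ) (hc : 2 ≤ c)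
    (H : Subgroup (FreeGroup (Fin c))) (hproper : H ≠ ⊤)
    (hfin : H.index ≠ 0)
    (hquot : ∃ f : FreeGroup (Fin c) →* FreeGroup (Fin c), f.range = H) :
    False := by
  obtain ⟨f, rfl⟩ := hquot
  have : f.range.FiniteIndex := ⟨hfin⟩
  have hd : 2 ≤ f.range.index := by
    have : f.range.index ≠ 1 := fun h => hproper (Subgroup.index_eq_one.mp h)
    omega
  have := f.range.index_mul_card_add_one_le f.rangeRestrict_surjective
  rw [Nat.card_fin] at this
  nlinarith
end
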